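/- arXiv:2410.20257 — 2 statements merged into one kernel-verified Lean document; each statement's English description precedes it below -/
import Mathlib

section
/- Let G be a finite connected simple graph with positive real edge weights. If a cutset D of G is not a minimum-weight u,v-cut for any pair of distinct vertices u and v, then D is not relevant, i.e., D belongs to no minimum cut basis of G. -/
/-
Suppose `D = ∂S` lies in a minimum cut basis. After breaking weight ties lexicographically, so
that distinct cuts have distinct weights, the Gomory–Hu recursion (split the terminals along a
minimum cut of maximum weight and uncross the minimum cuts of each half with it by
submodularity) yields minimum `xₚ,yₚ`-cuts `∂Wₚ` such that `∂S` is the symmetric difference of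
those whose pair is separated by `S`. `D` is an `xₚ,yₚ`-cut for each of these pairs but not a
minimum one, so every such `∂Wₚ` is strictly lighter than `D`. Hence `D` is a sum of strictly
lighter cutsets, and exchanging `D` for one of them that lies outside the span of the rest of
the basis gives a lighter cut basis.
-/

open Finset
open scoped Classical

variable {V : Type*}

/-- The edge boundary `∂S`: the set of edges of `G` with exactly one endpoint in `S`. -/
noncomputable def edgeBoundary [Fintype V] [DecidableEq V] (G : SimpleGraph V) (S : Finset V) :
    Finset (Sym2 V) :=
  Finset.univ.filter fun e => e ∈ G.edgeSet ∧ ∃ u v, e = s(u, v) ∧ u ∈ S ∧ v ∉ S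

/-- A cutset of `G` is an edge boundary `∂S` with `∅ ≠ S ≠ V`. -/
def IsCutset [Fintype V] [DecidableEq V] (G : SimpleGraph V) (D : Finset (Sym2 V)) : Prop :=
  ∃ S : Finset V, S ≠ ∅ ∧ S ≠ Finset.univ ∧ D = edgeBoundary G S

/-- Symmetric difference of a finite family of edge sets: the set of edges occurring in an
odd number of members of the family. -/
noncomputable def symmDiffFamily [Fintype V] [DecidableEq V] {ι : Type*} (s : Finset ι)
    (f : ι → Finset (Sym2 V)) : Finset (Sym2 V) :=
  Finset.univ.filter fun e => Odd ((s.filter fun i => e ∈ f i).card)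

/-- A cut basis: a family of `n - 1` cutsets such that every element of the cut space is the
symmetric difference of a subfamily, and no nonempty subfamily has empty symmetric
difference. -/
def IsCutBasis [Fintype V] [DecidableEq V] (G : SimpleGraph V)
    (𝒟 : Finset (Finset (Sym2 V))) : Prop :=
  𝒟.card = Fintype.card V - 1 ∧
  (∀ D ∈ 𝒟, IsCutset G D) ∧
  (∀ S : Finset V, ∃ ℬ ⊆ 𝒟, edgeBoundary G S = symmDiffFamily ℬ id) ∧
  (∀ ℬ ⊆ 𝒟, ℬ.Nonempty → symmDiffFamily ℬ id ≠ ∅)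

/-- The weight `|D|` of an edge set `D`. -/
def weight (w : Sym2 V → ℝ) (D : Finset (Sym2 V)) : ℝ :=
  ∑ e ∈ D, w e

/-- A minimum cut basis: a cut basis of minimum total weight. -/
def IsMinCutBasis [Fintype V] [DecidableEq V] (G : SimpleGraph V) (w : Sym2 V → ℝ)
    (𝒟 : Finset (Finset (Sym2 V))) : Prop :=
  IsCutBasis G 𝒟 ∧
  ∀ 𝒟' : Finset (Finset (Sym2 V)), IsCutBasis G 𝒟' →
    ∑ D ∈ 𝒟, weight w D ≤ ∑ D ∈ 𝒟', weight w D

/-- A cutset is relevant if it belongs to at least one minimum cut basis. -/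
def IsRelevant [Fintype V] [DecidableEq V] (G : SimpleGraph V) (w : Sym2 V → ℝ)
    (D : Finset (Sym2 V)) : Prop :=
  ∃ 𝒟 : Finset (Finset (Sym2 V)), IsMinCutBasis G w 𝒟 ∧ D ∈ 𝒟

/-- A `u,v`-cut: a cutset of the form `∂S` with `u ∈ S` and `v ∉ S`. -/
def IsUVCut [Fintype V] [DecidableEq V] (G : SimpleGraph V) (u v : V)
    (D : Finset (Sym2 V)) : Prop :=
  ∃ S : Finset V, u ∈ S ∧ v ∉ S ∧ D = edgeBoundary G S

/-- A minimum-weight `u,v`-cut. -/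
def IsMinUVCut [Fintype V] [DecidableEq V] (G : SimpleGraph V) (w : Sym2 V → ℝ) (u v : V)
    (D : Finset (Sym2 V)) : Prop :=
  IsUVCut G u v D ∧ ∀ D' : Finset (Sym2 V), IsUVCut G u v D' → weight w D ≤ weight w D'

/-- A minimum `u,v`-cut with respect to unit weights (cardinality). -/
def IsMinUVCutCard [Fintype V] [DecidableEq V] (G : SimpleGraph V) (u v : V)
    (D : Finset (Sym2 V)) : Prop :=
  IsUVCut G u v D ∧ ∀ D' : Finset (Sym2 V), IsUVCut G u v D' → D.card ≤ D'.card


section Cuts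

variable [Fintype V] [DecidableEq V] (G : SimpleGraph V)

lemma mem_edgeSet_of_mem_edgeBoundary {S : Finset V} {e : Sym2 V}
    (he : e ∈ edgeBoundary G S) : e ∈ G.edgeSet :=
  (mem_filter.1 he).2.1

lemma adj_of_mem_edgeBoundary {S : Finset V} {a b : V} (h : s(a, b) ∈ edgeBoundary G S) :
    G.Adj a b :=
  mem_edgeSet_of_mem_edgeBoundary G h

lemma mem_edgeBoundary_of_adj {S : Finset V} {a b : V} (hab : G.Adj a b) :
    s(a, b) ∈ edgeBoundary G S ↔ (a ∈ S ↔ b ∉ S) := by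
  simp only [edgeBoundary, mem_filter, mem_univ, true_and, SimpleGraph.mem_edgeSet, hab,
    Sym2.eq_iff]
  constructor
  · rintro ⟨u, v, ⟨rfl, rfl⟩ | ⟨rfl, rfl⟩, hu, hv⟩ <;> tauto
  · intro h
    by_cases ha : a ∈ S
    · exact ⟨a, b, .inl ⟨rfl, rfl⟩, ha, h.1 ha⟩
    · exact ⟨b, a, .inr ⟨rfl, rfl⟩, by tauto, ha⟩

lemma edgeBoundary_compl (S : Finset V) : edgeBoundary G Sᶜ = edgeBoundary G S := by
  ext e
  induction e using Sym2.ind with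
  | h a b =>
    by_cases hab : G.Adj a b
    · simp only [mem_edgeBoundary_of_adj G hab, mem_compl]
      tauto
    · have := mt (adj_of_mem_edgeBoundary G (S := S)) hab
      have := mt (adj_of_mem_edgeBoundary G (S := Sᶜ)) hab
      tauto

lemma eq_or_eq_compl_of_edgeBoundary_eq (hG : G.Connected) {S T : Finset V}
    (h : edgeBoundary G S = edgeBoundary G T) : S = T ∨ S = Tᶜ := by
  have hadj : ∀ a b, G.Adj a b → ((a ∈ S ↔ a ∈ T) ↔ (b ∈ S ↔ b ∈ T)) := by
    intro a b hab
    have := congrArg (s(a, b) ∈ ·) h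
    simp only [mem_edgeBoundary_of_adj G hab, eq_iff_iff] at this
    tauto
  have hwalk : ∀ a b, G.Walk a b → ((a ∈ S ↔ a ∈ T) ↔ (b ∈ S ↔ b ∈ T)) := by
    intro a b p
    induction p with
    | nil => exact Iff.rfl
    | cons hab _ ih => exact (hadj _ _ hab).trans ih
  by_cases hall : ∀ v, v ∈ S ↔ v ∈ T
  · exact .inl (ext hall)
  · obtain ⟨v₀, hv₀⟩ := not_forall.1 hall
    refine .inr (ext fun v => ?_)
    have := hwalk v v₀ (hG.preconnected v v₀).some
    rw [mem_compl]
    tauto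

variable {M : Type*} [AddCommMonoid M]

noncomputable def cutWeight (c : Sym2 V → M) (S : Finset V) : M :=
  ∑ e ∈ edgeBoundary G S, c e

lemma cutWeight_compl (c : Sym2 V → M) (S : Finset V) : cutWeight G c Sᶜ = cutWeight G c S := by
  rw [cutWeight, cutWeight, edgeBoundary_compl]

lemma cutWeight_inter_add_cutWeight_union_le [PartialOrder M] [IsOrderedAddMonoid M]
    {c : Sym2 V → M} (hc : ∀ e ∈ G.edgeSet, 0 ≤ c e) (A B : Finset V) :
    cutWeight G c (A ∩ B) + cutWeight G c (A ∪ B) ≤ cutWeight G c A + cutWeight G c B := by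
  have hedge : ∀ e : Sym2 V,
      (e ∈ edgeBoundary G (A ∩ B) ∨ e ∈ edgeBoundary G (A ∪ B) →
        e ∈ edgeBoundary G A ∨ e ∈ edgeBoundary G B) ∧
      (e ∈ edgeBoundary G (A ∩ B) ∧ e ∈ edgeBoundary G (A ∪ B) →
        e ∈ edgeBoundary G A ∧ e ∈ edgeBoundary G B) := by
    intro e
    induction e using Sym2.ind with
    | h a b =>
      by_cases hab : G.Adj a b
      · simp only [mem_edgeBoundary_of_adj G hab, mem_inter, mem_union]
        tauto
      · simp only [fun S => iff_false_intro (mt (adj_of_mem_edgeBoundary G (S := S)) hab)]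
        tauto
  have hnonneg : ∀ e ∈ edgeBoundary G A ∪ edgeBoundary G B, 0 ≤ c e := fun e he =>
    hc e (by rcases mem_union.1 he with he | he <;> exact mem_edgeSet_of_mem_edgeBoundary G he)
  unfold cutWeight
  rw [← sum_union_inter, ← sum_union_inter (s₁ := edgeBoundary G A)]
  refine add_le_add (sum_le_sum_of_subset_of_nonneg ?_ fun e he _ => hnonneg e he)
    (sum_le_sum_of_subset_of_nonneg ?_ fun e he _ =>
      hnonneg e (mem_union_left _ (mem_inter.1 he).1))
  · intro e he
    simpa only [mem_union] using (hedge e).1 (by simpa only [mem_union] using he)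
  · intro e he
    simpa only [mem_inter] using (hedge e).2 (by simpa only [mem_inter] using he)

variable [LinearOrder M]

def IsMinSide (c : Sym2 V → M) (x y : V) (W : Finset V) : Prop :=
  x ∈ W ∧ y ∉ W ∧ ∀ T : Finset V, x ∈ T → y ∉ T → cutWeight G c W ≤ cutWeight G c T

variable {G} {c : Sym2 V → M}

lemma exists_isMinSide {x y : V} (hxy : x ≠ y) : ∃ W, IsMinSide G c x y W := by
  obtain ⟨W, hW, hmin⟩ := (univ.filter fun T : Finset V => x ∈ T ∧ y ∉ T).exists_min_image
    (cutWeight G c) ⟨{x}, by simpa using hxy.symm⟩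
  simp only [mem_filter, mem_univ, true_and] at hW hmin
  exact ⟨W, hW.1, hW.2, fun T hx hy => hmin T ⟨hx, hy⟩⟩

namespace IsMinSide

variable {x y : V} {W : Finset V}

lemma le_of_not_iff (hW : IsMinSide G c x y W) {T : Finset V} (hT : ¬(x ∈ T ↔ y ∈ T)) :
    cutWeight G c W ≤ cutWeight G c T := by
  by_cases hx : x ∈ T
  · exact hW.2.2 T hx fun hy => hT (iff_of_true hx hy)
  · rw [← cutWeight_compl G c T]
    exact hW.2.2 Tᶜ (mem_compl.2 hx) fun hy => hT (iff_of_false hx (mem_compl.1 hy))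

lemma compl (hW : IsMinSide G c x y W) : IsMinSide G c y x Wᶜ :=
  ⟨mem_compl.2 hW.2.1, fun h => mem_compl.1 h hW.1, fun T _ _ => by
    rw [cutWeight_compl]
    exact hW.le_of_not_iff (by tauto)⟩

/-- Otherwise `X` would be a second minimum `r,s`-side, as heavy as `W`. -/
lemma mem_iff_mem_of_le (hG : G.Connected)
    (hinj : ∀ S T, cutWeight G c S = cutWeight G c T → edgeBoundary G S = edgeBoundary G T)
    {r s : V} (hW : IsMinSide G c r s W) {X : Finset V} (hX : IsMinSide G c x y X)
    (hx : x ∈ W) (hy : y ∈ W) (hle : cutWeight G c X ≤ cutWeight G c W) : r ∈ X ↔ s ∈ X := by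
  by_contra hrs
  rcases eq_or_eq_compl_of_edgeBoundary_eq G hG
    (hinj X W (le_antisymm hle (hW.le_of_not_iff hrs))) with rfl | rfl
  · exact hX.2.1 hy
  · exact mem_compl.1 hX.1 hx

end IsMinSide

end Cuts

section Parity

variable {α : Type*} [DecidableEq α]

noncomputable def charVec (A : Finset α) (a : α) : ZMod 2 :=
  if a ∈ A then 1 else 0

noncomputable def sepParity (S : Finset α) (u v : α) : ZMod 2 :=
  charVec S u + charVec S v

lemma charVec_injective : Function.Injective (charVec : Finset α → α → ZMod 2) := by
  intro A B h
  ext a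
  have := congrFun h a
  unfold charVec at this
  split_ifs at this <;> simp_all

lemma charVec_empty : charVec (∅ : Finset α) = 0 := by
  funext a
  simp [charVec]

lemma sepParity_eq_ite (S : Finset α) (u v : α) :
    sepParity S u v = if (u ∈ S ↔ v ∈ S) then 0 else 1 := by
  unfold sepParity charVec
  split_ifs <;> first | decide | tauto

lemma notMem_of_charVec_notMem_span {𝒯 : Finset (Finset α)} {C : Finset α}
    (h : charVec C ∉ Submodule.span (ZMod 2) (charVec '' 𝒯)) : C ∉ 𝒯 :=
  fun hC => h (Submodule.subset_span (Set.mem_image_of_mem _ hC))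

lemma sepParity_self (S : Finset α) (u : α) : sepParity S u u = 0 :=
  CharTwo.add_self_eq_zero _

noncomputable def retract (W : Finset α) (r a : α) : α :=
  if a ∈ W then a else r

lemma retract_mem_filter {R W : Finset α} {r a : α} (ha : a ∈ R)
    (hr : r ∈ R.filter (· ∈ W)) : retract W r a ∈ R.filter (· ∈ W) := by
  unfold retract
  split_ifs with h
  · exact mem_filter.2 ⟨ha, h⟩
  · exact hr

lemma sepParity_eq_retract_add [Fintype α] (S W : Finset α) (r s u v : α) :
    sepParity S u v = sepParity S (retract W r u) (retract W r v) +
      sepParity S (retract Wᶜ s u) (retract Wᶜ s v) + sepParity W u v * sepParity S r s := by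
  unfold sepParity charVec retract
  simp only [mem_compl]
  split_ifs <;> decide

noncomputable def sepParitySum (L : List (α × α × Finset α)) (S : Finset α) (u v : α) : ZMod 2 :=
  (L.map fun p => sepParity S p.1 p.2.1 * sepParity p.2.2 u v).sum

lemma sepParitySum_cons (p : α × α × Finset α) (L : List (α × α × Finset α)) (S : Finset α)
    (u v : α) :
    sepParitySum (p :: L) S u v =
      sepParity S p.1 p.2.1 * sepParity p.2.2 u v + sepParitySum L S u v := by
  simp [sepParitySum]

lemma sepParitySum_append (L₁ L₂ : List (α × α × Finset α)) (S : Finset α) (u v : α) :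
    sepParitySum (L₁ ++ L₂) S u v = sepParitySum L₁ S u v + sepParitySum L₂ S u v := by
  simp [sepParitySum]

end Parity

section GomoryHu

variable [Fintype V] [DecidableEq V] {G : SimpleGraph V}
  {M : Type*} [AddCommMonoid M] [LinearOrder M] [IsOrderedCancelAddMonoid M] {c : Sym2 V → M}

lemma mem_filter_retract_mem {W X : Finset V} {r a : V} :
    a ∈ univ.filter (retract W r · ∈ X) ↔ retract W r a ∈ X := by
  simp only [mem_filter, mem_univ, true_and]

lemma filter_retract_mem_eq (W X : Finset V) (r : V) :
    univ.filter (retract W r · ∈ X) = if r ∈ X then X ∪ Wᶜ else X ∩ W := by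
  ext a
  rw [mem_filter_retract_mem, retract]
  by_cases ha : a ∈ W <;> split_ifs <;> simp [*]

/-- Uncrossing, by submodularity and the minimality of `W`. -/
lemma IsMinSide.filter_retract_mem (hc : ∀ e ∈ G.edgeSet, 0 ≤ c e) {r s x y : V}
    {W X : Finset V} (hW : IsMinSide G c r s W) (hX : IsMinSide G c x y X) (hx : x ∈ W)
    (hy : y ∈ W) (hrs : r ∈ X ↔ s ∈ X) :
    IsMinSide G c x y (univ.filter (retract W r · ∈ X)) := by
  refine ⟨by rw [mem_filter_retract_mem, retract, if_pos hx]; exact hX.1,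
    by rw [mem_filter_retract_mem, retract, if_pos hy]; exact hX.2.1,
    fun T hxT hyT => le_trans ?_ (hX.2.2 T hxT hyT)⟩
  rw [filter_retract_mem_eq]
  split_ifs with hr
  · have hsub := cutWeight_inter_add_cutWeight_union_le G hc X Wᶜ
    have hlow : cutWeight G c W ≤ cutWeight G c (X ∩ Wᶜ) :=
      hW.le_of_not_iff (by simp [hW.1, hW.2.1, hrs.1 hr])
    rw [cutWeight_compl, add_comm (cutWeight G c X)] at hsub
    exact le_of_add_le_add_left ((add_le_add hlow le_rfl).trans hsub)
  · have hsub := cutWeight_inter_add_cutWeight_union_le G hc X W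
    have hlow : cutWeight G c W ≤ cutWeight G c (X ∪ W) :=
      hW.le_of_not_iff (by simp [hW.1, hW.2.1, mt hrs.2 hr])
    rw [add_comm (cutWeight G c X), add_comm (cutWeight G c (X ∩ W))] at hsub
    exact le_of_add_le_add_left ((add_le_add hlow le_rfl).trans hsub)

variable (G c)

/-- The fundamental cuts of a Gomory–Hu tree on the terminals `R`, seen modulo 2: a set separates
two terminals iff it separates an odd number of the pairs `(xₚ, yₚ)` whose side separates them,
i.e. of the tree edges on the path between them. -/
def IsGomoryHuList (R : Finset V) (L : List (V × V × Finset V)) : Prop :=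
  (∀ p ∈ L, p.1 ∈ R ∧ p.2.1 ∈ R ∧ IsMinSide G c p.1 p.2.1 p.2.2) ∧
  ∀ u ∈ R, ∀ v ∈ R, ∀ S : Finset V, sepParity S u v = sepParitySum L S u v

variable {G c}

noncomputable def retractSide (W : Finset V) (r : V) (p : V × V × Finset V) : V × V × Finset V :=
  (p.1, p.2.1, univ.filter (retract W r · ∈ p.2.2))

lemma charVec_filter_retract_mem (W X : Finset V) (r a : V) :
    charVec (univ.filter (retract W r · ∈ X)) a = charVec X (retract W r a) :=
  if_congr mem_filter_retract_mem rfl rfl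

lemma sepParitySum_map_retractSide (L : List (V × V × Finset V)) (W S : Finset V) (r u v : V) :
    sepParitySum (L.map (retractSide W r)) S u v =
      sepParitySum L S (retract W r u) (retract W r v) := by
  simp only [sepParitySum, retractSide, List.map_map, Function.comp_def, sepParity,
    charVec_filter_retract_mem]

lemma IsGomoryHuList.retractSide_isMinSide (hG : G.Connected) (hc : ∀ e ∈ G.edgeSet, 0 ≤ c e)
    (hinj : ∀ S T, cutWeight G c S = cutWeight G c T → edgeBoundary G S = edgeBoundary G T)
    {R W : Finset V} {r s : V} {L : List (V × V × Finset V)} (hL : IsGomoryHuList G c R L)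
    (hW : IsMinSide G c r s W) (hRW : ∀ a ∈ R, a ∈ W)
    (hle : ∀ p ∈ L, cutWeight G c p.2.2 ≤ cutWeight G c W) :
    ∀ p ∈ L.map (retractSide W r), p.1 ∈ R ∧ p.2.1 ∈ R ∧ IsMinSide G c p.1 p.2.1 p.2.2 := by
  simp only [List.mem_map]
  rintro _ ⟨⟨x, y, X⟩, hp, rfl⟩
  obtain ⟨hx, hy, hX⟩ := hL.1 _ hp
  exact ⟨hx, hy, hW.filter_retract_mem hc hX (hRW x hx) (hRW y hy)
    (hW.mem_iff_mem_of_le hG hinj hX (hRW x hx) (hRW y hy) (hle _ hp))⟩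

lemma IsGomoryHuList.cons_append (hG : G.Connected) (hc : ∀ e ∈ G.edgeSet, 0 ≤ c e)
    (hinj : ∀ S T, cutWeight G c S = cutWeight G c T → edgeBoundary G S = edgeBoundary G T)
    {R W : Finset V} {r s : V} {L₁ L₂ : List (V × V × Finset V)} (hr : r ∈ R) (hs : s ∈ R)
    (hW : IsMinSide G c r s W)
    (hmax : ∀ x ∈ R, ∀ y ∈ R, ∀ X, IsMinSide G c x y X → cutWeight G c X ≤ cutWeight G c W)
    (hL₁ : IsGomoryHuList G c (R.filter (· ∈ W)) L₁)
    (hL₂ : IsGomoryHuList G c (R.filter (· ∈ Wᶜ)) L₂) :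
    IsGomoryHuList G c R
      ((r, s, W) :: (L₁.map (retractSide W r) ++ L₂.map (retractSide Wᶜ s))) := by
  have hle : ∀ {R' : Finset V} {L : List (V × V × Finset V)}, R' ⊆ R →
      IsGomoryHuList G c R' L → ∀ p ∈ L, cutWeight G c p.2.2 ≤ cutWeight G c W :=
    fun hR' hL p hp =>
      have ⟨hx, hy, hX⟩ := hL.1 p hp
      hmax _ (hR' hx) _ (hR' hy) _ hX
  have h₁ := hL₁.retractSide_isMinSide hG hc hinj hW (fun a ha => (mem_filter.1 ha).2)
    (hle (filter_subset _ _) hL₁)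
  have h₂ := hL₂.retractSide_isMinSide hG hc hinj hW.compl (fun a ha => (mem_filter.1 ha).2)
    (by simpa only [cutWeight_compl] using hle (filter_subset _ _) hL₂)
  refine ⟨fun p hp => ?_, fun u hu v hv S => ?_⟩
  · simp only [List.mem_cons, List.mem_append] at hp
    rcases hp with rfl | hp | hp
    · exact ⟨hr, hs, hW⟩
    · obtain ⟨hx, hy, hX⟩ := h₁ p hp
      exact ⟨(mem_filter.1 hx).1, (mem_filter.1 hy).1, hX⟩
    · obtain ⟨hx, hy, hX⟩ := h₂ p hp
      exact ⟨(mem_filter.1 hx).1, (mem_filter.1 hy).1, hX⟩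
  · have hr₁ : r ∈ R.filter (· ∈ W) := mem_filter.2 ⟨hr, hW.1⟩
    have hs₂ : s ∈ R.filter (· ∈ Wᶜ) := mem_filter.2 ⟨hs, hW.compl.1⟩
    rw [sepParitySum_cons, sepParitySum_append, sepParitySum_map_retractSide,
      sepParitySum_map_retractSide,
      ← hL₁.2 _ (retract_mem_filter hu hr₁) _ (retract_mem_filter hv hr₁),
      ← hL₂.2 _ (retract_mem_filter hu hs₂) _ (retract_mem_filter hv hs₂),
      sepParity_eq_retract_add S W r s u v]
    ring

theorem exists_isGomoryHuList (hG : G.Connected) (hc : ∀ e ∈ G.edgeSet, 0 ≤ c e)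
    (hinj : ∀ S T, cutWeight G c S = cutWeight G c T → edgeBoundary G S = edgeBoundary G T)
    (R : Finset V) : ∃ L, IsGomoryHuList G c R L := by
  induction R using Finset.strongInduction with | H R ih => ?_
  rcases (R : Set V).subsingleton_or_nontrivial with hR | ⟨r₀, hr₀, s₀, hs₀, hne⟩
  · exact ⟨[], by simp, fun u hu v hv S => by rw [hR hu hv, sepParity_self]; rfl⟩
  obtain ⟨W₀, hW₀⟩ := exists_isMinSide (G := G) (c := c) hne
  obtain ⟨⟨r, s, W⟩, hmem, hmax⟩ :=
    ((R ×ˢ R ×ˢ univ).filter fun p => IsMinSide G c p.1 p.2.1 p.2.2).exists_max_image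
      (fun p => cutWeight G c p.2.2)
      ⟨(r₀, s₀, W₀), mem_filter.2 ⟨mem_product.2 ⟨hr₀, mem_product.2 ⟨hs₀, mem_univ _⟩⟩, hW₀⟩⟩
  simp only [mem_filter, mem_product, mem_univ, and_true] at hmem
  obtain ⟨⟨hr, hs⟩, hW⟩ := hmem
  obtain ⟨L₁, hL₁⟩ := ih _ (filter_ssubset.2 ⟨s, hs, hW.2.1⟩)
  obtain ⟨L₂, hL₂⟩ := ih _ (filter_ssubset.2 ⟨r, hr, hW.compl.2.1⟩)
  exact ⟨_, hL₁.cons_append hG hc hinj hr hs hW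
    (fun x hx y hy X hX => hmax (x, y, X) (mem_filter.2 ⟨by simp [hx, hy], hX⟩)) hL₂⟩

end GomoryHu

section TieBreak

variable [Fintype V]

/-- Distinct powers of two in the second coordinate give distinct edge sets distinct weights. -/
noncomputable def tieBreak (w : Sym2 V → ℝ) (e : Sym2 V) : ℝ ×ₗ ℕ :=
  toLex (w e, 2 ^ (Fintype.equivFin (Sym2 V) e : ℕ))

lemma sum_tieBreak (w : Sym2 V → ℝ) (A : Finset (Sym2 V)) :
    ∑ e ∈ A, tieBreak w e =
      toLex (weight w A, ∑ e ∈ A, 2 ^ (Fintype.equivFin (Sym2 V) e : ℕ)) := by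
  simp only [tieBreak, weight]
  exact congrArg toLex (Prod.ext (Prod.fst_sum ..) (Prod.snd_sum ..))

lemma sum_tieBreak_injective (w : Sym2 V → ℝ) :
    Function.Injective fun A : Finset (Sym2 V) => ∑ e ∈ A, tieBreak w e := by
  intro A B h
  let ι : Sym2 V ↪ ℕ := (Fintype.equivFin (Sym2 V)).toEmbedding.trans Fin.valEmbedding
  have h₂ := congrArg (fun x => (ofLex x).2) h
  simp only [sum_tieBreak, ofLex_toLex] at h₂
  refine map_injective ι (geomSum_injective le_rfl ?_)
  simp only [sum_map]
  exact h₂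

lemma tieBreak_nonneg {w : Sym2 V → ℝ} {e : Sym2 V} (he : 0 ≤ w e) : 0 ≤ tieBreak w e :=
  Prod.Lex.le_iff.2 (he.lt_or_eq.imp id fun h => ⟨h, Nat.zero_le _⟩)

lemma weight_le_of_sum_tieBreak_le {w : Sym2 V → ℝ} {A B : Finset (Sym2 V)}
    (h : ∑ e ∈ A, tieBreak w e ≤ ∑ e ∈ B, tieBreak w e) : weight w A ≤ weight w B := by
  rw [sum_tieBreak, sum_tieBreak] at h
  exact Prod.Lex.monotone_fst _ _ h

lemma IsMinSide.isMinUVCut [DecidableEq V] {G : SimpleGraph V} {w : Sym2 V → ℝ} {x y : V}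
    {W : Finset V}
    (hW : IsMinSide G (tieBreak w) x y W) : IsMinUVCut G w x y (edgeBoundary G W) :=
  ⟨⟨W, hW.1, hW.2.1, rfl⟩, by
    rintro _ ⟨T, hx, hy, rfl⟩
    exact weight_le_of_sum_tieBreak_le (hW.2.2 T hx hy)⟩

end TieBreak

section MinCuts

variable [Fintype V] [DecidableEq V] {G : SimpleGraph V} {w : Sym2 V → ℝ} {x y : V}
  {C D : Finset (Sym2 V)}

lemma IsUVCut.isCutset (h : IsUVCut G x y C) : IsCutset G C :=
  let ⟨T, hx, hy, hC⟩ := h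
  ⟨T, ne_empty_of_mem hx, fun hT => hy (hT ▸ mem_univ y), hC⟩

lemma IsUVCut.symm (h : IsUVCut G x y C) : IsUVCut G y x C :=
  let ⟨T, hx, hy, hC⟩ := h
  ⟨Tᶜ, mem_compl.2 hy, fun h => mem_compl.1 h hx, hC.trans (edgeBoundary_compl G T).symm⟩

lemma IsMinUVCut.symm (h : IsMinUVCut G w x y C) : IsMinUVCut G w y x C :=
  ⟨h.1.symm, fun _ hD => h.2 _ hD.symm⟩

lemma IsMinUVCut.weight_lt (hC : IsMinUVCut G w x y C) (hD : IsUVCut G x y D)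
    (hD' : ¬IsMinUVCut G w x y D) : weight w C < weight w D := by
  by_contra! hle
  exact hD' ⟨hD, fun _ hD'' => hle.trans (hC.2 _ hD'')⟩

end MinCuts

section CutSpace

variable [Fintype V] [DecidableEq V] {G : SimpleGraph V}

open Submodule

lemma charVec_edgeBoundary_of_adj {S : Finset V} {a b : V} (hab : G.Adj a b) :
    charVec (edgeBoundary G S) s(a, b) = sepParity S a b := by
  rw [sepParity_eq_ite, charVec]
  simp only [mem_edgeBoundary_of_adj G hab]
  split_ifs <;> tauto

lemma charVec_edgeBoundary_of_notMem {S : Finset V} {e : Sym2 V} (he : e ∉ G.edgeSet) :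
    charVec (edgeBoundary G S) e = 0 :=
  if_neg (mt (mem_edgeSet_of_mem_edgeBoundary G) he)

variable {M : Type*} [AddCommMonoid M] [LinearOrder M] {c : Sym2 V → M}

lemma IsGomoryHuList.charVec_edgeBoundary {L : List (V × V × Finset V)}
    (hL : IsGomoryHuList G c univ L) (S : Finset V) :
    charVec (edgeBoundary G S) =
      (L.map fun p => sepParity S p.1 p.2.1 • charVec (edgeBoundary G p.2.2)).sum := by
  funext e
  rw [Pi.list_sum_apply, List.map_map]
  induction e using Sym2.ind with
  | h a b =>
    by_cases hab : G.Adj a b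
    · simp only [Function.comp_def, Pi.smul_apply, smul_eq_mul,
        charVec_edgeBoundary_of_adj hab]
      exact hL.2 a (mem_univ a) b (mem_univ b) S
    · have he : s(a, b) ∉ G.edgeSet := hab
      simp [Function.comp_def, charVec_edgeBoundary_of_notMem he]

/-- The minimum cuts needed are the fundamental cuts of a Gomory–Hu tree for the tie-broken
weights. -/
theorem charVec_edgeBoundary_mem_span_isMinUVCut (hG : G.Connected) {w : Sym2 V → ℝ}
    (hw : ∀ e ∈ G.edgeSet, 0 ≤ w e) (S : Finset V) :
    charVec (edgeBoundary G S) ∈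
      span (ZMod 2) (charVec '' {C | ∃ x ∈ S, ∃ y ∉ S, IsMinUVCut G w x y C}) := by
  obtain ⟨L, hL⟩ := exists_isGomoryHuList hG (fun e he => tieBreak_nonneg (hw e he))
    (fun _ _ h => sum_tieBreak_injective w h) univ
  rw [hL.charVec_edgeBoundary S]
  refine list_sum_mem fun z hz => ?_
  obtain ⟨⟨x, y, W⟩, hp, rfl⟩ := List.mem_map.1 hz
  have hW := (hL.1 _ hp).2.2.isMinUVCut
  dsimp only
  rw [sepParity_eq_ite]
  split_ifs with hxy
  · rw [zero_smul]
    exact zero_mem _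
  · rw [one_smul]
    refine subset_span ⟨_, ?_, rfl⟩
    by_cases hx : x ∈ S
    · exact ⟨x, hx, y, by tauto, hW⟩
    · exact ⟨y, by tauto, x, hx, hW.symm⟩

end CutSpace

section CutBasis

variable [Fintype V] [DecidableEq V] {G : SimpleGraph V}

open Submodule

lemma charVec_symmDiffFamily (ℬ : Finset (Finset (Sym2 V))) :
    charVec (symmDiffFamily ℬ id) = ∑ B ∈ ℬ, charVec B := by
  funext e
  simp only [Finset.sum_apply, charVec, sum_boole, symmDiffFamily, mem_filter, mem_univ,
    true_and, id]
  split_ifs with h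
  · exact (ZMod.natCast_eq_one_iff_odd.2 h).symm
  · exact (ZMod.natCast_eq_zero_iff_even.2 (Nat.not_odd_iff_even.1 h)).symm

lemma sum_smul_eq_sum_filter {ι E : Type*} [AddCommMonoid E] [Module (ZMod 2) E]
    (t : Finset ι) (g : ι → ZMod 2) (v : ι → E) :
    ∑ i ∈ t, g i • v i = ∑ i ∈ t.filter (g · ≠ 0), v i := by
  rw [sum_filter]
  refine sum_congr rfl fun i _ => ?_
  rcases (by decide : ∀ a : ZMod 2, a = 0 ∨ a = 1) (g i) with h | h <;> simp [h]

lemma charVec_mem_span_iff {𝒟 : Finset (Finset (Sym2 V))} {X : Finset (Sym2 V)} :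
    charVec X ∈ span (ZMod 2) (charVec '' 𝒟) ↔ ∃ ℬ ⊆ 𝒟, X = symmDiffFamily ℬ id := by
  constructor
  · intro h
    rw [← coe_image] at h
    obtain ⟨f, -, hf⟩ := mem_span_finset.1 h
    rw [sum_image fun _ _ _ _ h => charVec_injective h, sum_smul_eq_sum_filter] at hf
    exact ⟨_, filter_subset _ _, charVec_injective (by rw [charVec_symmDiffFamily, hf])⟩
  · rintro ⟨ℬ, hℬ, rfl⟩
    rw [charVec_symmDiffFamily]
    exact sum_mem fun B hB => subset_span (Set.mem_image_of_mem _ (hℬ hB))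

lemma linearIndepOn_charVec_iff {𝒟 : Finset (Finset (Sym2 V))} :
    LinearIndepOn (ZMod 2) charVec (𝒟 : Set (Finset (Sym2 V))) ↔
      ∀ ℬ ⊆ 𝒟, ℬ.Nonempty → symmDiffFamily ℬ id ≠ ∅ := by
  rw [linearIndepOn_iff']
  constructor
  · rintro h ℬ hℬ ⟨B, hB⟩ hempty
    refine one_ne_zero (h ℬ 1 (coe_subset.2 hℬ) ?_ B hB)
    simp only [Pi.one_apply, one_smul, ← charVec_symmDiffFamily, hempty, charVec_empty]
  · intro h t g ht hsum i hi
    by_contra hgi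
    refine h (t.filter (g · ≠ 0)) ((filter_subset _ _).trans (coe_subset.1 ht))
      ⟨i, mem_filter.2 ⟨hi, hgi⟩⟩ (charVec_injective ?_)
    rw [charVec_symmDiffFamily, ← sum_smul_eq_sum_filter, hsum, charVec_empty]

namespace IsCutBasis

variable {𝒟 : Finset (Finset (Sym2 V))} {C D : Finset (Sym2 V)}

lemma charVec_mem_span (h : IsCutBasis G 𝒟) (hC : IsCutset G C) :
    charVec C ∈ span (ZMod 2) (charVec '' 𝒟) := by
  obtain ⟨S, -, -, rfl⟩ := hC
  exact charVec_mem_span_iff.2 (h.2.2.1 S)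

lemma charVec_notMem_span_erase (h : IsCutBasis G 𝒟) (hD : D ∈ 𝒟) :
    charVec D ∉ span (ZMod 2) (charVec '' (𝒟.erase D)) := by
  have hind := linearIndepOn_charVec_iff.2 h.2.2.2
  rw [← insert_erase hD, coe_insert, linearIndepOn_insert (by simp)] at hind
  exact hind.2

theorem exchange (h : IsCutBasis G 𝒟) (hD : D ∈ 𝒟) (hC : IsCutset G C)
    (hCD : charVec C ∉ span (ZMod 2) (charVec '' (𝒟.erase D))) :
    IsCutBasis G (insert C (𝒟.erase D)) := by
  have hCnot := notMem_of_charVec_notMem_span hCD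
  have hspan : span (ZMod 2) (charVec '' 𝒟) ≤
      span (ZMod 2) (charVec '' (insert C (𝒟.erase D))) := by
    rw [Set.image_insert_eq]
    refine span_le.2 (Set.image_subset_iff.2 fun B hB => ?_)
    by_cases hBD : B = D
    · subst hBD
      refine mem_span_insert_exchange ?_ hCD
      rw [← Set.image_insert_eq, ← coe_insert, insert_erase hB]
      exact h.charVec_mem_span hC
    · exact subset_span (Set.mem_insert_of_mem _ (Set.mem_image_of_mem _ (mem_erase.2 ⟨hBD, hB⟩)))
  refine ⟨?_, ?_, fun S => ?_, ?_⟩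
  · rw [card_insert_of_notMem hCnot, card_erase_add_one hD, h.1]
  · intro B hB
    rcases mem_insert.1 hB with rfl | hB
    exacts [hC, h.2.1 B (mem_of_mem_erase hB)]
  · rw [← charVec_mem_span_iff, coe_insert]
    exact hspan (charVec_mem_span_iff.2 (h.2.2.1 S))
  · rw [← linearIndepOn_charVec_iff, coe_insert, linearIndepOn_insert hCnot]
    exact ⟨(linearIndepOn_charVec_iff.2 h.2.2.2).mono (coe_subset.2 (erase_subset _ _)), hCD⟩

end IsCutBasis

/-- One of the lighter cutsets could replace `D`, giving a lighter cut basis. -/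
theorem IsMinCutBasis.charVec_notMem_span_lighter {w : Sym2 V → ℝ}
    {𝒟 : Finset (Finset (Sym2 V))} {D : Finset (Sym2 V)} (h : IsMinCutBasis G w 𝒟) (hD : D ∈ 𝒟) :
    charVec D ∉ span (ZMod 2) (charVec '' {C | IsCutset G C ∧ weight w C < weight w D}) := by
  intro hDmem
  obtain ⟨C, ⟨hC, hlt⟩, hCD⟩ : ∃ C ∈ {C | IsCutset G C ∧ weight w C < weight w D},
      charVec C ∉ span (ZMod 2) (charVec '' (𝒟.erase D)) := by
    by_contra! hall
    exact h.1.charVec_notMem_span_erase hD (span_le.2 (Set.image_subset_iff.2 hall) hDmem)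
  have hle := h.2 _ (h.1.exchange hD hC hCD)
  rw [sum_insert (notMem_of_charVec_notMem_span hCD), ← add_sum_erase _ _ hD] at hle
  linarith

end CutBasis

/-- In a finite connected simple graph with positive edge weights, a cutset `D`
that is not a minimum-weight `u,v`-cut for any pair of distinct vertices `u, v` is not
relevant. -/
theorem not_min_uv_cut_not_relevant [Fintype V] [DecidableEq V] (G : SimpleGraph V)
    (hG : G.Connected) (w : Sym2 V → ℝ) (hw : ∀ e ∈ G.edgeSet, 0 < w e)
    (D : Finset (Sym2 V)) (hD : IsCutset G D)
    (h : ¬ ∃ u v : V, u ≠ v ∧ IsMinUVCut G w u v D) :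
    ¬ IsRelevant G w D := by
  rintro ⟨𝒟, h𝒟, hD𝒟⟩
  obtain ⟨S, -, -, rfl⟩ := hD
  refine h𝒟.charVec_notMem_span_lighter hD𝒟 (Submodule.span_mono ?_
    (charVec_edgeBoundary_mem_span_isMinUVCut hG (fun e he => (hw e he).le) S))
  rintro _ ⟨C, ⟨x, hx, y, hy, hC⟩, rfl⟩
  exact ⟨C, ⟨hC.1.isCutset, hC.weight_lt ⟨S, hx, hy, rfl⟩ fun hS =>
    h ⟨x, y, ne_of_mem_of_not_mem hx hy, hS⟩⟩, rfl⟩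
end

section
/- Let G be a finite connected simple graph in which every edge has weight 1, and let Δ be the maximum vertex degree of G. Then every relevant cutset of G contains at most Δ edges; consequently, the number of relevant cutsets of G is at most the number of subsets of E(G) of cardinality at most Δ. -/
open Finset
open scoped Classical

variable {V : Type*}

open scoped symmDiff

section H
variable [Fintype V] [DecidableEq V] {G : SimpleGraph V}

lemma mem_symmDiffFamily {ι : Type*} {s : Finset ι} {f : ι → Finset (Sym2 V)} {e : Sym2 V} :
    e ∈ symmDiffFamily s f ↔ ((s.filter fun i => e ∈ f i).card) % 2 = 1 := by
  simp [symmDiffFamily, Nat.odd_iff]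

lemma filter_symmDiff' {α : Type*} [DecidableEq α] (p : α → Prop) [DecidablePred p]
    (s t : Finset α) : (s ∆ t).filter p = (s.filter p) ∆ (t.filter p) := by
  ext a; simp [Finset.mem_symmDiff, Finset.mem_filter]; tauto

lemma card_symmDiff_mod {α : Type*} [DecidableEq α] (s t : Finset α) :
    (s ∆ t).card % 2 = (s.card + t.card) % 2 := by
  have h1 : (s ∆ t).card + (s ∩ t).card = (s ∪ t).card := by
    rw [← Finset.card_union_of_disjoint]
    · congr 1
      ext a; simp [Finset.mem_symmDiff]; tauto
    · rw [Finset.disjoint_left]; intro a ha ha'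
      simp [Finset.mem_symmDiff] at ha
      simp at ha'; tauto
  have h2 := Finset.card_union_add_card_inter s t
  omega

lemma symmDiffFamily_symmDiff (ℬ₁ ℬ₂ : Finset (Finset (Sym2 V))) :
    symmDiffFamily (ℬ₁ ∆ ℬ₂) id = symmDiffFamily ℬ₁ id ∆ symmDiffFamily ℬ₂ id := by
  ext e
  simp only [Finset.mem_symmDiff, mem_symmDiffFamily]
  rw [filter_symmDiff', card_symmDiff_mod]
  omega

lemma symmDiffFamily_singleton (B : Finset (Sym2 V)) : symmDiffFamily {B} id = B := by
  ext e
  simp [mem_symmDiffFamily, Finset.filter_singleton]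
  split_ifs with h <;> simp [h]

lemma symmDiffFamily_empty : symmDiffFamily (∅ : Finset (Finset (Sym2 V))) id = ∅ := by
  ext e; simp [mem_symmDiffFamily]

lemma insert_eq_symmDiff {α : Type*} [DecidableEq α] {x : α} {s : Finset α} (h : x ∉ s) :
    insert x s = {x} ∆ s := by
  ext a; simp [Finset.mem_symmDiff]
  constructor
  · rintro (rfl | ha)
    · exact Or.inl ⟨rfl, h⟩
    · by_cases hax : a = x
      · subst hax; exact absurd ha h
      · exact Or.inr ⟨ha, hax⟩
  · tauto

lemma symmDiffFamily_insert {B : Finset (Sym2 V)} {ℬ : Finset (Finset (Sym2 V))} (h : B ∉ ℬ) :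
    symmDiffFamily (insert B ℬ) id = B ∆ symmDiffFamily ℬ id := by
  rw [insert_eq_symmDiff h, symmDiffFamily_symmDiff, symmDiffFamily_singleton]

lemma mem_edgeBoundary_pair {S : Finset V} {a b : V} :
    s(a, b) ∈ edgeBoundary G S ↔ G.Adj a b ∧ ((a ∈ S ∧ b ∉ S) ∨ (b ∈ S ∧ a ∉ S)) := by
  simp only [edgeBoundary, Finset.mem_filter, Finset.mem_univ, true_and,
    SimpleGraph.mem_edgeSet]
  constructor
  · rintro ⟨hadj, u, v, huv, hu, hv⟩
    rw [Sym2.eq_iff] at huv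
    rcases huv with ⟨rfl, rfl⟩ | ⟨rfl, rfl⟩
    · exact ⟨hadj, Or.inl ⟨hu, hv⟩⟩
    · exact ⟨hadj, Or.inr ⟨hu, hv⟩⟩
  · rintro ⟨hadj, ⟨ha, hb⟩ | ⟨hb, ha⟩⟩
    · exact ⟨hadj, a, b, rfl, ha, hb⟩
    · exact ⟨hadj, b, a, (Sym2.eq_swap), hb, ha⟩

lemma edgeBoundary_symmDiff (G : SimpleGraph V) (S T : Finset V) :
    edgeBoundary G (S ∆ T) = edgeBoundary G S ∆ edgeBoundary G T := by
  ext e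
  refine e.ind (fun a b => ?_)
  simp only [Finset.mem_symmDiff, mem_edgeBoundary_pair]
  by_cases h : G.Adj a b <;> simp [h] <;> tauto

lemma edgeBoundary_empty (G : SimpleGraph V) : edgeBoundary G (∅ : Finset V) = ∅ := by
  ext e; simp [edgeBoundary]

lemma edgeBoundary_singleton_card_le [DecidableRel G.Adj] (u : V) :
    (edgeBoundary G {u}).card ≤ G.degree u := by
  have hsub : edgeBoundary G {u} ⊆ (G.neighborFinset u).image (fun v => s(u, v)) := by
    intro e he
    induction e using Sym2.ind with
    | _ a b =>
      rw [mem_edgeBoundary_pair] at he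
      obtain ⟨hadj, h⟩ := he
      simp only [Finset.mem_singleton] at h
      rcases h with ⟨rfl, _⟩ | ⟨rfl, _⟩
      · exact Finset.mem_image.mpr ⟨b, by simpa using hadj, rfl⟩
      · exact Finset.mem_image.mpr ⟨a, by simpa using hadj.symm, Sym2.eq_swap⟩
  calc (edgeBoundary G {u}).card ≤ _ := Finset.card_le_card hsub
    _ ≤ (G.neighborFinset u).card := Finset.card_image_le
    _ = G.degree u := rfl

lemma weight_one (D : Finset (Sym2 V)) : weight (fun _ => (1 : ℝ)) D = D.card := by
  simp [weight]

/-- Key lemma: a relevant cutset has at most `Δ` edges. -/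
lemma relevant_card_le [DecidableRel G.Adj] (hne : Nonempty V) {D : Finset (Sym2 V)}
    (hrel : IsRelevant G (fun _ => (1 : ℝ)) D) : D.card ≤ G.maxDegree := by
  obtain ⟨𝒟, ⟨⟨hcard, hcut, hspan, hind⟩, hmin⟩, hD⟩ := hrel
  set 𝒟₀ := 𝒟.erase D with h𝒟₀
  -- the "span" of 𝒟₀
  set U : Finset V → Prop := fun S => ∃ ℬ ⊆ 𝒟₀, edgeBoundary G S = symmDiffFamily ℬ id with hU
  have hUsymm : ∀ S T, U S → U T → U (S ∆ T) := by
    rintro S T ⟨ℬ₁, h₁, e₁⟩ ⟨ℬ₂, h₂, e₂⟩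
    refine ⟨ℬ₁ ∆ ℬ₂, ?_, ?_⟩
    · intro x hx
      rw [Finset.mem_symmDiff] at hx
      rcases hx with ⟨hx, _⟩ | ⟨hx, _⟩
      · exact h₁ hx
      · exact h₂ hx
    · rw [edgeBoundary_symmDiff, symmDiffFamily_symmDiff, e₁, e₂]
  -- not every set is in the span
  have hnotall : ¬ ∀ S, U S := by
    intro hall
    obtain ⟨SD, _, _, hSD⟩ := hcut D hD
    obtain ⟨ℬ, hℬ, hE⟩ := hall SD
    have hDℬ : D ∉ ℬ := fun h => (Finset.mem_erase.mp (hℬ h)).1 rfl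
    refine hind (insert D ℬ) ?_ ⟨D, Finset.mem_insert_self _ _⟩ ?_
    · intro x hx
      rcases Finset.mem_insert.mp hx with rfl | hx
      · exact hD
      · exact (Finset.mem_erase.mp (hℬ hx)).2
    · rw [symmDiffFamily_insert hDℬ, ← hE, ← hSD, symmDiff_self]
      rfl
  -- some singleton is outside the span
  have hsing : ∃ u, ¬ U {u} := by
    by_contra h
    push_neg at h
    apply hnotall
    intro S
    induction S using Finset.induction_on with
    | empty => exact ⟨∅, Finset.empty_subset _, by rw [edgeBoundary_empty, symmDiffFamily_empty]⟩
    | @insert a S ha ih =>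
      rw [insert_eq_symmDiff ha]
      exact hUsymm _ _ (h a) ih
  obtain ⟨u, hu⟩ := hsing
  set Bu := edgeBoundary G {u} with hBu
  have hstar_not : Bu ∉ 𝒟₀ := by
    intro h
    exact hu ⟨{Bu}, Finset.singleton_subset_iff.mpr h, (symmDiffFamily_singleton _).symm⟩
  have hcardpos : 1 ≤ 𝒟.card := Finset.card_pos.mpr ⟨D, hD⟩
  have hV2 : 2 ≤ Fintype.card V := by
    have := Fintype.card_pos_iff.mpr hne
    omega
  set 𝒟' := insert Bu 𝒟₀ with h𝒟'
  have hbasis' : IsCutBasis G 𝒟' := by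
    refine ⟨?_, ?_, ?_, ?_⟩
    · rw [Finset.card_insert_of_notMem hstar_not, Finset.card_erase_of_mem hD]
      omega
    · intro D' hD'
      rcases Finset.mem_insert.mp hD' with rfl | hD'
      · refine ⟨{u}, Finset.singleton_ne_empty u, ?_, rfl⟩
        obtain ⟨v, _, hvu⟩ := Finset.exists_mem_ne
          (by rw [Finset.card_univ]; omega : 1 < (Finset.univ : Finset V).card) u
        intro h
        exact hvu (Finset.mem_singleton.mp (h ▸ Finset.mem_univ v))
      · exact hcut D' (Finset.mem_of_mem_erase hD')
    · intro S
      obtain ⟨ℬ, hℬ, hE⟩ := hspan S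
      by_cases hDℬ : D ∈ ℬ
      · obtain ⟨ℬ₀, hℬ₀, hE₀⟩ := hspan {u}
        have hDℬ₀ : D ∈ ℬ₀ := by
          by_contra h
          exact hu ⟨ℬ₀, fun x hx => Finset.mem_erase.mpr
            ⟨fun hxD => h (hxD ▸ hx), hℬ₀ hx⟩, hE₀⟩
        set 𝒞 := ℬ ∆ ℬ₀ with h𝒞
        have h𝒞sub : 𝒞 ⊆ 𝒟₀ := by
          intro x hx
          rw [Finset.mem_symmDiff] at hx
          rcases hx with ⟨hx, hx'⟩ | ⟨hx, hx'⟩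
          · exact Finset.mem_erase.mpr ⟨fun h => hx' (h ▸ hDℬ₀), hℬ hx⟩
          · exact Finset.mem_erase.mpr ⟨fun h => hx' (h ▸ hDℬ), hℬ₀ hx⟩
        have hBu𝒞 : Bu ∉ 𝒞 := fun h => hstar_not (h𝒞sub h)
        refine ⟨insert Bu 𝒞, Finset.insert_subset_insert _ h𝒞sub, ?_⟩
        rw [symmDiffFamily_insert hBu𝒞, symmDiffFamily_symmDiff, ← hE, ← hE₀]
        rw [symmDiff_comm (edgeBoundary G S), symmDiff_symmDiff_cancel_left]
      · exact ⟨ℬ, fun x hx => Finset.mem_insert_of_mem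
          (Finset.mem_erase.mpr ⟨fun h => hDℬ (h ▸ hx), hℬ hx⟩), hE⟩
    · intro ℬ hℬ hne' hcontra
      by_cases hBuℬ : Bu ∈ ℬ
      · have hsub' : ℬ.erase Bu ⊆ 𝒟₀ := by
          intro x hx
          obtain ⟨hxBu, hxℬ⟩ := Finset.mem_erase.mp hx
          rcases Finset.mem_insert.mp (hℬ hxℬ) with rfl | h
          · exact absurd rfl hxBu
          · exact h
        have : symmDiffFamily ℬ id = Bu ∆ symmDiffFamily (ℬ.erase Bu) id := by
          conv_lhs => rw [← Finset.insert_erase hBuℬ]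
          exact symmDiffFamily_insert (Finset.notMem_erase _ _)
        rw [hcontra] at this
        have hEq : Bu = symmDiffFamily (ℬ.erase Bu) id := by
          have := this.symm
          rwa [← Finset.bot_eq_empty, symmDiff_eq_bot] at this
        exact hu ⟨ℬ.erase Bu, hsub', hEq⟩
      · refine hind ℬ ?_ hne' hcontra
        intro x hx
        rcases Finset.mem_insert.mp (hℬ hx) with rfl | h
        · exact absurd hx hBuℬ
        · exact Finset.mem_of_mem_erase h
  -- compare weights
  have hle := hmin 𝒟' hbasis'
  rw [h𝒟', Finset.sum_insert hstar_not, ← Finset.add_sum_erase _ _ hD] at hle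
  have hwle : weight (fun _ => (1 : ℝ)) D ≤ weight (fun _ => (1 : ℝ)) Bu := by linarith
  rw [weight_one, weight_one] at hwle
  have hcard_le : D.card ≤ Bu.card := Nat.cast_le.mp hwle
  calc D.card ≤ Bu.card := hcard_le
    _ ≤ G.degree u := edgeBoundary_singleton_card_le u
    _ ≤ G.maxDegree := SimpleGraph.degree_le_maxDegree G u

end H

/-- In a finite connected simple graph with unit edge weights, every relevant
cutset has at most `Δ` edges; consequently the number of relevant cutsets is at most the
number of subsets of `E(G)` of cardinality at most `Δ`. -/
theorem relevant_card_le_maxDegree_and_count [Fintype V] [DecidableEq V] (G : SimpleGraph V)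
    [DecidableRel G.Adj] (hG : G.Connected) :
    (∀ D : Finset (Sym2 V), IsCutset G D → IsRelevant G (fun _ => (1 : ℝ)) D →
        D.card ≤ G.maxDegree) ∧
    (Finset.univ.filter fun D : Finset (Sym2 V) =>
        IsCutset G D ∧ IsRelevant G (fun _ => (1 : ℝ)) D).card ≤
      (G.edgeFinset.powerset.filter fun D => D.card ≤ G.maxDegree).card := by
  have hne : Nonempty V := hG.nonempty
  have key : ∀ D : Finset (Sym2 V), IsCutset G D → IsRelevant G (fun _ => (1 : ℝ)) D →
      D.card ≤ G.maxDegree := fun D _ hrel => relevant_card_le hne hrel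
  refine ⟨key, Finset.card_le_card ?_⟩
  intro D hDmem
  simp only [Finset.mem_filter] at hDmem
  obtain ⟨-, hcut, hrel⟩ := hDmem
  simp only [Finset.mem_filter, Finset.mem_powerset]
  refine ⟨?_, key D hcut hrel⟩
  obtain ⟨S, -, -, rfl⟩ := hcut
  intro e he
  rw [SimpleGraph.mem_edgeFinset]
  simp only [edgeBoundary, Finset.mem_filter] at he
  exact he.2.1
end
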